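/- Let (C, C', C'') be an equitable 3-partition of Q_n with quotient matrix [[0,a,n-a],[a,0,n-a],[a+1,a+1,n-2a-2]]. Partition C into C_even and C_odd, and C' into C'_even and C'_odd, according to the parity of the Hamming weight of the words. Then (C_even ∪ C'_odd, C'', C'_even ∪ C_odd) is an equitable 3-partition of Q_n with quotient matrix [[a, n-a, 0],[a+1, n-2a-2, a+1],[0, n-a, a]]. -/
import Mathlib


/-- Number of neighbors of `v` in `S` in the hypercube Q_n. -/
def nbrs {n : ℕ} (S : Finset (Fin n → Fin 2)) (v : Fin n → Fin 2) : ℕ :=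
  (S.filter (fun w => hammingDist v w = 1)).card

/-- Hamming weight of a binary word. -/
def wt {n : ℕ} (x : Fin n → Fin 2) : ℕ :=
  (Finset.univ.filter (fun i => x i = 1)).card

lemma parity_flip {n : ℕ} {v w : Fin n → Fin 2} (h : hammingDist v w = 1) :
    (Even (wt v) ↔ ¬ Even (wt w)) := by
  have key : (wt v : ZMod 2) + (wt w : ZMod 2) = 1 := by
    have hd : ((hammingDist v w : ℕ) : ZMod 2) = 1 := by rw [h]; norm_num
    rw [← hd, hammingDist, wt, wt]
    simp only [Finset.card_filter, Nat.cast_sum, ← Finset.sum_add_distrib]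
    apply Finset.sum_congr rfl
    intro i _
    have : ∀ x y : Fin 2, ((if x = 1 then (1:ℕ) else 0 : ℕ) : ZMod 2) +
        ((if y = 1 then (1:ℕ) else 0 : ℕ) : ZMod 2)
        = ((if x ≠ y then (1:ℕ) else 0 : ℕ) : ZMod 2) := by decide
    exact this (v i) (w i)
  have e0 : ∀ m : ℕ, Even m ↔ (m : ZMod 2) = 0 := by
    intro m
    rw [even_iff_two_dvd]
    exact (ZMod.natCast_eq_zero_iff m 2).symm
  rw [e0, e0]
  revert key
  generalize (wt v : ZMod 2) = x
  generalize (wt w : ZMod 2) = y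
  revert x y; decide

lemma nbrs_union {n : ℕ} {S T : Finset (Fin n → Fin 2)} (h : Disjoint S T)
    (v : Fin n → Fin 2) : nbrs (S ∪ T) v = nbrs S v + nbrs T v := by
  unfold nbrs
  rw [Finset.filter_union]
  exact Finset.card_union_of_disjoint (Finset.disjoint_filter_filter h)

-- if wt v has parity p, neighbors have the opposite parity
lemma nbrs_filter_same {n : ℕ} (S : Finset (Fin n → Fin 2)) (v : Fin n → Fin 2)
    (p : Prop) [Decidable p] (hp : ∀ w, hammingDist v w = 1 → ¬ (Even (wt w) ↔ p)) :
    nbrs (S.filter (fun x => Even (wt x) ↔ p)) v = 0 := by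
  unfold nbrs
  rw [Finset.card_eq_zero, Finset.filter_eq_empty_iff]
  intro w hw hd
  exact hp w hd (Finset.mem_filter.mp hw).2

lemma nbrs_filter_opp {n : ℕ} (S : Finset (Fin n → Fin 2)) (v : Fin n → Fin 2)
    (p : Prop) [Decidable p] (hp : ∀ w, hammingDist v w = 1 → (Even (wt w) ↔ p)) :
    nbrs (S.filter (fun x => Even (wt x) ↔ p)) v = nbrs S v := by
  unfold nbrs
  congr 1
  ext w
  simp only [Finset.mem_filter]
  constructor
  · rintro ⟨⟨hS, _⟩, hd⟩; exact ⟨hS, hd⟩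
  · rintro ⟨hS, hd⟩; exact ⟨⟨hS, hp w hd⟩, hd⟩

lemma nbrs_even_of_even {n : ℕ} (S : Finset (Fin n → Fin 2)) {v : Fin n → Fin 2}
    (hv : Even (wt v)) : nbrs (S.filter (fun x => Even (wt x))) v = 0 := by
  unfold nbrs
  rw [Finset.card_eq_zero, Finset.filter_eq_empty_iff]
  intro w hw hd
  exact ((parity_flip hd).mp hv) (Finset.mem_filter.mp hw).2

lemma nbrs_odd_of_odd {n : ℕ} (S : Finset (Fin n → Fin 2)) {v : Fin n → Fin 2}
    (hv : ¬ Even (wt v)) : nbrs (S.filter (fun x => ¬ Even (wt x))) v = 0 := by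
  unfold nbrs
  rw [Finset.card_eq_zero, Finset.filter_eq_empty_iff]
  intro w hw hd
  have := parity_flip hd
  have h2 := (Finset.mem_filter.mp hw).2
  tauto

lemma nbrs_odd_of_even {n : ℕ} (S : Finset (Fin n → Fin 2)) {v : Fin n → Fin 2}
    (hv : Even (wt v)) : nbrs (S.filter (fun x => ¬ Even (wt x))) v = nbrs S v := by
  unfold nbrs
  congr 1
  ext w
  simp only [Finset.mem_filter]
  constructor
  · rintro ⟨⟨hS, _⟩, hd⟩; exact ⟨hS, hd⟩
  · rintro ⟨hS, hd⟩; exact ⟨⟨hS, (parity_flip hd).mp hv⟩, hd⟩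

lemma nbrs_even_of_odd {n : ℕ} (S : Finset (Fin n → Fin 2)) {v : Fin n → Fin 2}
    (hv : ¬ Even (wt v)) : nbrs (S.filter (fun x => Even (wt x))) v = nbrs S v := by
  unfold nbrs
  congr 1
  ext w
  simp only [Finset.mem_filter]
  constructor
  · rintro ⟨⟨hS, _⟩, hd⟩; exact ⟨hS, hd⟩
  · rintro ⟨hS, hd⟩
    have := parity_flip hd
    refine ⟨⟨hS, ?_⟩, hd⟩
    tauto

/-- From an equitable 3-partition (C,C',C'') with quotient matrix
[[0,a,n-a],[a,0,n-a],[a+1,a+1,n-2a-2]] (with C' = C+1̄, n odd), splitting C and C'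
by weight parity gives an equitable 3-partition with quotient matrix
[[a,n-a,0],[a+1,n-2a-2,a+1],[0,n-a,a]]. -/
theorem stmt_7 (n a : ℕ) (hodd : Odd n)
    (C C' C'' : Finset (Fin n → Fin 2))
    (hd1 : Disjoint C C') (hd2 : Disjoint C C'') (hd3 : Disjoint C' C'')
    (hcover : C ∪ C' ∪ C'' = Finset.univ)
    (hcompl : C' = C.image (fun x => fun i => x i + 1))
    (h0 : ∀ v ∈ C, (nbrs C v : ℤ) = 0 ∧ (nbrs C' v : ℤ) = a ∧ (nbrs C'' v : ℤ) = n - a)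
    (h1 : ∀ v ∈ C', (nbrs C v : ℤ) = a ∧ (nbrs C' v : ℤ) = 0 ∧ (nbrs C'' v : ℤ) = n - a)
    (h2 : ∀ v ∈ C'', (nbrs C v : ℤ) = a + 1 ∧ (nbrs C' v : ℤ) = a + 1 ∧
      (nbrs C'' v : ℤ) = n - 2 * a - 2) :
    let D0 := C.filter (fun x => Even (wt x)) ∪ C'.filter (fun x => ¬ Even (wt x));
    let D2 := C'.filter (fun x => Even (wt x)) ∪ C.filter (fun x => ¬ Even (wt x));
    (∀ v ∈ D0, (nbrs D0 v : ℤ) = a ∧ (nbrs C'' v : ℤ) = n - a ∧ (nbrs D2 v : ℤ) = 0) ∧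
    (∀ v ∈ C'', (nbrs D0 v : ℤ) = a + 1 ∧ (nbrs C'' v : ℤ) = n - 2 * a - 2 ∧
      (nbrs D2 v : ℤ) = a + 1) ∧
    (∀ v ∈ D2, (nbrs D0 v : ℤ) = 0 ∧ (nbrs C'' v : ℤ) = n - a ∧ (nbrs D2 v : ℤ) = a) := by
  intro D0 D2
  have hdisj0 : Disjoint (C.filter (fun x => Even (wt x)))
      (C'.filter (fun x => ¬ Even (wt x))) := Finset.disjoint_filter_filter hd1
  have hdisj2 : Disjoint (C'.filter (fun x => Even (wt x)))
      (C.filter (fun x => ¬ Even (wt x))) := Finset.disjoint_filter_filter hd1.symm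
  have hU0 : ∀ v, nbrs D0 v = nbrs (C.filter (fun x => Even (wt x))) v
      + nbrs (C'.filter (fun x => ¬ Even (wt x))) v := fun v => nbrs_union hdisj0 v
  have hU2 : ∀ v, nbrs D2 v = nbrs (C'.filter (fun x => Even (wt x))) v
      + nbrs (C.filter (fun x => ¬ Even (wt x))) v := fun v => nbrs_union hdisj2 v
  refine ⟨?_, ?_, ?_⟩
  · intro v hv
    rcases Finset.mem_union.mp hv with h | h
    · obtain ⟨hvC, hve⟩ := Finset.mem_filter.mp h
      obtain ⟨e0, e1, e2⟩ := h0 v hvC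
      have hD0 : nbrs D0 v = nbrs C' v := by
        rw [hU0, nbrs_even_of_even C hve, nbrs_odd_of_even C' hve, zero_add]
      have hD2 : nbrs D2 v = nbrs C v := by
        rw [hU2, nbrs_even_of_even C' hve, nbrs_odd_of_even C hve, zero_add]
      exact ⟨by rw [hD0]; exact e1, e2, by rw [hD2]; exact e0⟩
    · obtain ⟨hvC, hvo⟩ := Finset.mem_filter.mp h
      obtain ⟨e0, e1, e2⟩ := h1 v hvC
      have hD0 : nbrs D0 v = nbrs C v := by
        rw [hU0, nbrs_even_of_odd C hvo, nbrs_odd_of_odd C' hvo, add_zero]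
      have hD2 : nbrs D2 v = nbrs C' v := by
        rw [hU2, nbrs_even_of_odd C' hvo, nbrs_odd_of_odd C hvo, add_zero]
      exact ⟨by rw [hD0]; exact e0, e2, by rw [hD2]; exact e1⟩
  · intro v hv
    obtain ⟨e0, e1, e2⟩ := h2 v hv
    by_cases hve : Even (wt v)
    · have hD0 : nbrs D0 v = nbrs C' v := by
        rw [hU0, nbrs_even_of_even C hve, nbrs_odd_of_even C' hve, zero_add]
      have hD2 : nbrs D2 v = nbrs C v := by
        rw [hU2, nbrs_even_of_even C' hve, nbrs_odd_of_even C hve, zero_add]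
      exact ⟨by rw [hD0]; exact e1, e2, by rw [hD2]; exact e0⟩
    · have hD0 : nbrs D0 v = nbrs C v := by
        rw [hU0, nbrs_even_of_odd C hve, nbrs_odd_of_odd C' hve, add_zero]
      have hD2 : nbrs D2 v = nbrs C' v := by
        rw [hU2, nbrs_even_of_odd C' hve, nbrs_odd_of_odd C hve, add_zero]
      exact ⟨by rw [hD0]; exact e0, e2, by rw [hD2]; exact e1⟩
  · intro v hv
    rcases Finset.mem_union.mp hv with h | h
    · obtain ⟨hvC, hve⟩ := Finset.mem_filter.mp h
      obtain ⟨e0, e1, e2⟩ := h1 v hvC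
      have hD0 : nbrs D0 v = nbrs C' v := by
        rw [hU0, nbrs_even_of_even C hve, nbrs_odd_of_even C' hve, zero_add]
      have hD2 : nbrs D2 v = nbrs C v := by
        rw [hU2, nbrs_even_of_even C' hve, nbrs_odd_of_even C hve, zero_add]
      exact ⟨by rw [hD0]; exact e1, e2, by rw [hD2]; exact e0⟩
    · obtain ⟨hvC, hvo⟩ := Finset.mem_filter.mp h
      obtain ⟨e0, e1, e2⟩ := h0 v hvC
      have hD0 : nbrs D0 v = nbrs C v := by
        rw [hU0, nbrs_even_of_odd C hvo, nbrs_odd_of_odd C' hvo, add_zero]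
      have hD2 : nbrs D2 v = nbrs C' v := by
        rw [hU2, nbrs_even_of_odd C' hvo, nbrs_odd_of_odd C hvo, add_zero]
      exact ⟨by rw [hD0]; exact e0, e2, by rw [hD2]; exact e1⟩
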